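/- arXiv:1706.01903 — 3 statements merged into one kernel-verified Lean document; each statement's English description precedes it below -/
import Mathlib

section
/- Let V be a finite-dimensional real vector space with a nondegenerate symmetric bilinear form B, let Λ be a self-dual integral lattice in V, let V = V₁ ⊕ V₂ be an orthogonal direct-sum decomposition, and set Λᵢ = Λ ∩ Vᵢ; assume each Λᵢ spans Vᵢ over ℝ. Then there exists an isomorphism of abelian groups φ : Λ₁*/Λ₁ → Λ₂*/Λ₂ (discriminant groups, with duals taken inside Vᵢ) such that for all a₁ ∈ Λ₁* and a₂ ∈ Λ₂*, one has a₁ + a₂ ∈ Λ if and only if φ([a₁]) = [a₂], where [·] denotes the class modulo Λᵢ. -/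
/-! Write `πᵢ` for the projection onto `Vᵢ` along the other summand. Orthogonality and
self-duality show that the dual of `π₁ Λ` inside `V₁` is `Λ₁`. Since `π₁ Λ` lies in `Λ₁*`, which
is discrete because `Λ₁` spans `V₁`, it is a full lattice in `V₁`, and double duality gives
`Λ₁* = π₁ Λ`; likewise `Λ₂* = π₂ Λ`. So `x ↦ [πᵢ x]` maps `Λ` onto `Λᵢ*/Λᵢ`, and as
`π₁ x + π₂ x = x` both maps have kernel `{x ∈ Λ | π₁ x ∈ Λ}`; `φ` is the induced isomorphism.
For `x ∈ Λ` with `π₁ x = a₁`, both `a₁ + a₂ ∈ Λ` and `φ [a₁] = [a₂]` say that `π₂ x - a₂ ∈ Λ`. -/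

def dualLattice {V : Type*} [AddCommGroup V] [Module ℝ V]
    (B : V →ₗ[ℝ] V →ₗ[ℝ] ℝ) (W : Submodule ℝ V) (L : AddSubgroup V) : AddSubgroup V where
  carrier := {v | v ∈ W ∧ ∀ l ∈ L, ∃ n : ℤ, B v l = (n : ℝ)}
  zero_mem' := ⟨W.zero_mem, fun l _ => ⟨0, by simp⟩⟩
  add_mem' := by
    rintro a b ⟨haW, ha⟩ ⟨hbW, hb⟩
    refine ⟨W.add_mem haW hbW, fun l hl => ?_⟩
    obtain ⟨m, hm⟩ := ha l hl
    obtain ⟨n, hn⟩ := hb l hl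
    exact ⟨m + n, by simp [map_add, hm, hn]⟩
  neg_mem' := by
    rintro a ⟨haW, ha⟩
    refine ⟨W.neg_mem haW, fun l hl => ?_⟩
    obtain ⟨m, hm⟩ := ha l hl
    exact ⟨-m, by simp [map_neg, hm]⟩

abbrev discriminantGroup {V : Type*} [AddCommGroup V] [Module ℝ V]
    (B : V →ₗ[ℝ] V →ₗ[ℝ] ℝ) (W : Submodule ℝ V) (L : AddSubgroup V) : Type _ :=
  dualLattice B W L ⧸ L.addSubgroupOf (dualLattice B W L)

open Module Submodule LinearMap.BilinForm

namespace LinearMap.BilinForm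

theorem dualSubmodule_antitone {R S M : Type*} [CommRing R] [Field S] [AddCommGroup M]
    [Algebra R S] [Module R M] [Module S M] [IsScalarTower R S M]
    (B : LinearMap.BilinForm S M) :
    Antitone (B.dualSubmodule (R := R)) :=
  fun _ _ h _ hx y hy => hx y (h hy)

variable {E : Type*} [NormedAddCommGroup E] [NormedSpace ℝ E] [FiniteDimensional ℝ E]
  {B : LinearMap.BilinForm ℝ E}

theorem discreteTopology_dualSubmodule (hB : B.Nondegenerate) {N : Submodule ℤ E}
    (hN : span ℝ (N : Set E) = ⊤) : DiscreteTopology (B.dualSubmodule N) := by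
  classical
  let c := Basis.ofSpan hN.ge
  have hc : span ℤ (Set.range c) ≤ N := span_le.2 (Basis.ofSpan_subset hN.ge)
  have : DiscreteTopology (B.dualSubmodule (span ℤ (Set.range c))) := by
    rw [B.dualSubmodule_span_of_basis hB c]
    infer_instance
  exact DiscreteTopology.of_subset this (dualSubmodule_antitone B hc)

theorem dualSubmodule_dualSubmodule (hB : B.Nondegenerate) (hB' : B.IsSymm)
    (N : Submodule ℤ E) [DiscreteTopology N] [IsZLattice ℝ N] :
    B.dualSubmodule (B.dualSubmodule N) = N := by
  rw [← (Free.chooseBasis ℤ N).ofZLatticeBasis_span ℝ,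
    dualSubmodule_dualSubmodule_of_basis B hB hB']

end LinearMap.BilinForm

theorem AddMonoidHom.exists_addEquiv_comp_eq_of_ker_eq {G H₁ H₂ : Type*} [AddGroup G]
    [AddGroup H₁] [AddGroup H₂] {f₁ : G →+ H₁} {f₂ : G →+ H₂} (hf₁ : Function.Surjective f₁)
    (hf₂ : Function.Surjective f₂) (h : f₁.ker = f₂.ker) :
    ∃ φ : H₁ ≃+ H₂, ∀ g, φ (f₁ g) = f₂ g := by
  refine ⟨(QuotientAddGroup.quotientKerEquivOfSurjective f₁ hf₁).symm.trans
    ((QuotientAddGroup.quotientAddEquivOfEq h).trans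
      (QuotientAddGroup.quotientKerEquivOfSurjective f₂ hf₂)), fun g => ?_⟩
  have : (QuotientAddGroup.quotientKerEquivOfSurjective f₁ hf₁).symm (f₁ g) = g := by
    rw [AddEquiv.symm_apply_eq]
    rfl
  rw [AddEquiv.trans_apply, AddEquiv.trans_apply, this]
  rfl

theorem Submodule.mem_one_int_iff {R : Type*} [Ring R] {x : R} :
    x ∈ (1 : Submodule ℤ R) ↔ ∃ n : ℤ, x = n := by
  simp [Submodule.mem_one, eq_comm]

section AddCommGroup

variable {V : Type*} [AddCommGroup V] [Module ℝ V] {B : V →ₗ[ℝ] V →ₗ[ℝ] ℝ}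
  {W W' : Submodule ℝ V} (hWW' : IsCompl W W') {Λ : AddSubgroup V}

include hWW' in
theorem apply_projection_of_isOrtho (horth : ∀ w ∈ W, ∀ w' ∈ W', B w w' = 0) {w : V}
    (hw : w ∈ W) (x : V) : B w (W.projection W' hWW' x) = B w x := by
  rw [← sub_eq_zero, ← map_sub, ← neg_sub, map_neg, horth w hw _ (sub_projection_mem hWW' x),
    neg_zero]

include hWW' in
theorem nondegenerate_domRestrict₁₂_of_isOrtho (hB : B.SeparatingLeft) (hB' : B.IsRefl)
    (horth : ∀ w ∈ W, ∀ w' ∈ W', B w w' = 0) : (B.domRestrict₁₂ W W).Nondegenerate := by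
  refine LinearMap.nondegenerate_restrict_of_disjoint_orthogonal hB' ?_
  refine disjoint_def.2 fun w hw hw' => hB w fun x => ?_
  rw [← apply_projection_of_isOrtho hWW' horth hw]
  exact hB' _ _ (hw' _ (projection_apply_mem hWW' x))

theorem span_comap_subtype_eq_top
    (h : span ℝ ((Λ ⊓ W.toAddSubgroup : AddSubgroup V) : Set V) = W) :
    span ℝ (Λ.toIntSubmodule.comap (W.subtype.restrictScalars ℤ) : Set W) = ⊤ := by
  apply map_injective_of_injective W.injective_subtype
  rw [map_span, Submodule.map_top, range_subtype]
  convert h using 2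
  ext x
  simp [and_comm]

theorem mem_dualLattice_iff_mem_dualSubmodule (a : W) :
    (a : V) ∈ dualLattice B W (Λ ⊓ W.toAddSubgroup) ↔
      a ∈ dualSubmodule (B.domRestrict₁₂ W W)
        (Λ.toIntSubmodule.comap (W.subtype.restrictScalars ℤ)) := by
  constructor
  · rintro ⟨-, ha⟩ l hl
    exact mem_one_int_iff.2 (ha l ⟨hl, l.2⟩)
  · intro ha
    exact ⟨a.2, fun l ⟨hlΛ, hlW⟩ => mem_one_int_iff.1 (ha ⟨l, hlW⟩ hlΛ)⟩

theorem dualSubmodule_map_projectionOnto_eq_comap_subtype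
    (horth : ∀ w ∈ W, ∀ w' ∈ W', B w w' = 0) (hself : ∀ v, v ∈ Λ ↔ ∀ l ∈ Λ, ∃ n : ℤ, B v l = n) :
    dualSubmodule (B.domRestrict₁₂ W W)
        (Λ.toIntSubmodule.map ((W.projectionOnto W' hWW').restrictScalars ℤ)) =
      Λ.toIntSubmodule.comap (W.subtype.restrictScalars ℤ) := by
  ext v
  have hv (x : V) : B.domRestrict₁₂ W W v (W.projectionOnto W' hWW' x) = B v x :=
    apply_projection_of_isOrtho hWW' horth v.2 x
  change _ ↔ (v : V) ∈ Λ
  rw [hself, mem_dualSubmodule]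
  constructor
  · intro h x hx
    simpa only [LinearMap.restrictScalars_apply, hv, mem_one_int_iff] using
      h _ (mem_map_of_mem (p := Λ.toIntSubmodule) hx)
  · rintro h _ ⟨x, hx, rfl⟩
    simpa only [LinearMap.restrictScalars_apply, hv, mem_one_int_iff] using h x hx

end AddCommGroup

section FiniteDimensional

variable {V : Type*} [NormedAddCommGroup V] [NormedSpace ℝ V] [FiniteDimensional ℝ V]
  {B : V →ₗ[ℝ] V →ₗ[ℝ] ℝ} {W W' : Submodule ℝ V} (hWW' : IsCompl W W') {Λ : AddSubgroup V}
  (hB : B.SeparatingLeft) (hsymm : B.IsSymm) (horth : ∀ w ∈ W, ∀ w' ∈ W', B w w' = 0)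
  (hself : ∀ v, v ∈ Λ ↔ ∀ l ∈ Λ, ∃ n : ℤ, B v l = n)
  (hspan : span ℝ ((Λ ⊓ W.toAddSubgroup : AddSubgroup V) : Set V) = W)
include hB hsymm horth hself hspan

theorem dualSubmodule_comap_subtype_eq_map_projectionOnto :
    dualSubmodule (B.domRestrict₁₂ W W)
        (Λ.toIntSubmodule.comap (W.subtype.restrictScalars ℤ)) =
      Λ.toIntSubmodule.map ((W.projectionOnto W' hWW').restrictScalars ℤ) := by
  set BW := B.domRestrict₁₂ W W
  set ΛW := Λ.toIntSubmodule.comap (W.subtype.restrictScalars ℤ)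
  set PW := Λ.toIntSubmodule.map ((W.projectionOnto W' hWW').restrictScalars ℤ)
  have hBW : BW.Nondegenerate :=
    nondegenerate_domRestrict₁₂_of_isOrtho hWW' hB hsymm.isRefl horth
  have hBW' : LinearMap.BilinForm.IsSymm BW := ⟨fun x y => hsymm.eq x y⟩
  have hΛW : span ℝ (ΛW : Set W) = ⊤ := span_comap_subtype_eq_top hspan
  have hPW : PW ≤ dualSubmodule BW ΛW := by
    rintro _ ⟨x, hx, rfl⟩ l hl
    obtain ⟨n, hn⟩ := (hself l).1 hl x hx
    refine mem_one_int_iff.2 ⟨n, ?_⟩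
    rw [← hn, ← apply_projection_of_isOrtho hWW' horth l.2]
    exact hsymm.eq _ _
  have hΛPW : ΛW ≤ PW := fun l hl => ⟨l, hl, projectionOnto_apply_left hWW' l⟩
  have : DiscreteTopology PW :=
    DiscreteTopology.of_subset (discreteTopology_dualSubmodule hBW hΛW) hPW
  have : IsZLattice ℝ PW := ⟨top_unique (hΛW ▸ span_mono hΛPW)⟩
  have hdual : dualSubmodule BW PW = ΛW :=
    dualSubmodule_map_projectionOnto_eq_comap_subtype hWW' horth hself
  rw [← hdual, dualSubmodule_dualSubmodule hBW hBW']

theorem mem_dualLattice_iff_exists_projection {a : V} :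
    a ∈ dualLattice B W (Λ ⊓ W.toAddSubgroup) ↔ ∃ x ∈ Λ, W.projection W' hWW' x = a := by
  have hdual :=
    dualSubmodule_comap_subtype_eq_map_projectionOnto hWW' hB hsymm horth hself hspan
  constructor
  · intro ha
    have := (mem_dualLattice_iff_mem_dualSubmodule ⟨a, ha.1⟩).1 ha
    rw [hdual] at this
    obtain ⟨x, hx, hxa⟩ := this
    exact ⟨x, hx, congrArg Subtype.val hxa⟩
  · rintro ⟨x, hx, rfl⟩
    refine (mem_dualLattice_iff_mem_dualSubmodule ⟨_, projection_apply_mem hWW' x⟩).2 ?_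
    rw [hdual]
    exact ⟨x, hx, rfl⟩

theorem exists_surjective_discriminant_map :
    ∃ f : Λ →+ discriminantGroup B W (Λ ⊓ W.toAddSubgroup),
      Function.Surjective f ∧ ∀ (x : Λ) (a : dualLattice B W (Λ ⊓ W.toAddSubgroup)),
        f x = QuotientAddGroup.mk a ↔ W.projection W' hWW' x - a ∈ Λ := by
  have hmem {a : V} :=
    mem_dualLattice_iff_exists_projection hWW' hB hsymm horth hself hspan (a := a)
  let p : Λ →+ dualLattice B W (Λ ⊓ W.toAddSubgroup) :=
    ((W.projection W' hWW').toAddMonoidHom.comp Λ.subtype).codRestrict _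
      fun x => hmem.2 ⟨x, x.2, rfl⟩
  have hp (x : Λ) (a : dualLattice B W (Λ ⊓ W.toAddSubgroup)) :
      (p x : discriminantGroup B W (Λ ⊓ W.toAddSubgroup)) = QuotientAddGroup.mk a ↔
        W.projection W' hWW' x - a ∈ Λ := by
    rw [QuotientAddGroup.eq_iff_sub_mem, AddSubgroup.mem_addSubgroupOf, AddSubgroup.mem_inf]
    exact and_iff_left (sub_mem (p x).2.1 a.2.1)
  refine ⟨(QuotientAddGroup.mk' _).comp p, ?_, hp⟩
  rintro ⟨a⟩
  obtain ⟨x, hx, hxa⟩ := hmem.1 a.2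
  exact ⟨⟨x, hx⟩, (hp _ a).2 (by simp [hxa])⟩

end FiniteDimensional

theorem selfdual_lattice_decomposition_discriminant_iso_general
    {V : Type*} [NormedAddCommGroup V] [NormedSpace ℝ V] [FiniteDimensional ℝ V]
    (B : V →ₗ[ℝ] V →ₗ[ℝ] ℝ)
    (hsymm : ∀ x y, B x y = B y x)
    (hnondeg : ∀ x, (∀ y, B x y = 0) → x = 0)
    (Λ : AddSubgroup V)
    (hselfdual : ∀ v : V, v ∈ Λ ↔ ∀ l ∈ Λ, ∃ n : ℤ, B v l = (n : ℝ))
    (V₁ V₂ : Submodule ℝ V)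
    (hcompl : IsCompl V₁ V₂)
    (horth : ∀ v₁ ∈ V₁, ∀ v₂ ∈ V₂, B v₁ v₂ = 0)
    (hspan1 : Submodule.span ℝ ((Λ ⊓ V₁.toAddSubgroup : AddSubgroup V) : Set V) = V₁)
    (hspan2 : Submodule.span ℝ ((Λ ⊓ V₂.toAddSubgroup : AddSubgroup V) : Set V) = V₂) :
    ∃ φ : (dualLattice B V₁ (Λ ⊓ V₁.toAddSubgroup) ⧸
            (Λ ⊓ V₁.toAddSubgroup).addSubgroupOf (dualLattice B V₁ (Λ ⊓ V₁.toAddSubgroup))) ≃+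
          (dualLattice B V₂ (Λ ⊓ V₂.toAddSubgroup) ⧸
            (Λ ⊓ V₂.toAddSubgroup).addSubgroupOf (dualLattice B V₂ (Λ ⊓ V₂.toAddSubgroup))),
      ∀ (a₁ : dualLattice B V₁ (Λ ⊓ V₁.toAddSubgroup))
        (a₂ : dualLattice B V₂ (Λ ⊓ V₂.toAddSubgroup)),
        ((a₁ : V) + (a₂ : V) ∈ Λ) ↔
          φ (QuotientAddGroup.mk a₁) = QuotientAddGroup.mk a₂ := by
  have hsymm' : B.IsSymm := ⟨hsymm⟩
  have horth' : ∀ v₂ ∈ V₂, ∀ v₁ ∈ V₁, B v₂ v₁ = 0 := fun v₂ h₂ v₁ h₁ => by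
    rw [hsymm, horth v₁ h₁ v₂ h₂]
  obtain ⟨f₁, hf₁, hf₁_eq⟩ :=
    exists_surjective_discriminant_map hcompl hnondeg hsymm' horth hselfdual hspan1
  obtain ⟨f₂, hf₂, hf₂_eq⟩ :=
    exists_surjective_discriminant_map hcompl.symm hnondeg hsymm' horth' hselfdual hspan2
  have hker : f₁.ker = f₂.ker := by
    ext x
    have h₁ := hf₁_eq x 0
    have h₂ := hf₂_eq x 0
    simp only [QuotientAddGroup.mk_zero, ZeroMemClass.coe_zero, sub_zero] at h₁ h₂
    rw [AddMonoidHom.mem_ker, AddMonoidHom.mem_ker, h₁, h₂,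
      projection_eq_self_sub_projection hcompl, sub_eq_add_neg, add_mem_cancel_left x.2,
      neg_mem_iff]
  obtain ⟨φ, hφ⟩ := AddMonoidHom.exists_addEquiv_comp_eq_of_ker_eq hf₁ hf₂ hker
  refine ⟨φ, fun a₁ a₂ => ?_⟩
  obtain ⟨x, hx, hxa₁⟩ :=
    (mem_dualLattice_iff_exists_projection hcompl hnondeg hsymm' horth hselfdual hspan1).1 a₁.2
  rw [← (hf₁_eq ⟨x, hx⟩ a₁).2 (by simp [hxa₁]), hφ, hf₂_eq,
    projection_eq_self_sub_projection hcompl, hxa₁, sub_sub, sub_eq_add_neg,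
    add_mem_cancel_left hx, neg_mem_iff]

/-- If `Λ` is a self-dual integral lattice in a finite-dimensional real vector
space `V` with nondegenerate symmetric bilinear form `B`, and `V = V₁ ⊕ V₂` is an orthogonal
decomposition with `Λᵢ = Λ ∩ Vᵢ` spanning `Vᵢ`, then there is an isomorphism of abelian groups
`φ : Λ₁*/Λ₁ ≃+ Λ₂*/Λ₂` such that `a₁ + a₂ ∈ Λ` iff `φ [a₁] = [a₂]`. -/
theorem selfdual_lattice_decomposition_discriminant_iso
    {V : Type*} [NormedAddCommGroup V] [NormedSpace ℝ V] [FiniteDimensional ℝ V]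
    (B : V →ₗ[ℝ] V →ₗ[ℝ] ℝ)
    (hsymm : ∀ x y, B x y = B y x)
    (hnondeg : ∀ x, (∀ y, B x y = 0) → x = 0)
    (Λ : AddSubgroup V)
    (hdisc : DiscreteTopology Λ)
    (hspan : Submodule.span ℝ (Λ : Set V) = ⊤)
    (hint : ∀ x ∈ Λ, ∀ y ∈ Λ, ∃ n : ℤ, B x y = (n : ℝ))
    (hselfdual : ∀ v : V, v ∈ Λ ↔ ∀ l ∈ Λ, ∃ n : ℤ, B v l = (n : ℝ))
    (V₁ V₂ : Submodule ℝ V)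
    (hcompl : IsCompl V₁ V₂)
    (horth : ∀ v₁ ∈ V₁, ∀ v₂ ∈ V₂, B v₁ v₂ = 0)
    (hspan1 : Submodule.span ℝ ((Λ ⊓ V₁.toAddSubgroup : AddSubgroup V) : Set V) = V₁)
    (hspan2 : Submodule.span ℝ ((Λ ⊓ V₂.toAddSubgroup : AddSubgroup V) : Set V) = V₂) :
    ∃ φ : (dualLattice B V₁ (Λ ⊓ V₁.toAddSubgroup) ⧸
            (Λ ⊓ V₁.toAddSubgroup).addSubgroupOf (dualLattice B V₁ (Λ ⊓ V₁.toAddSubgroup))) ≃+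
          (dualLattice B V₂ (Λ ⊓ V₂.toAddSubgroup) ⧸
            (Λ ⊓ V₂.toAddSubgroup).addSubgroupOf (dualLattice B V₂ (Λ ⊓ V₂.toAddSubgroup))),
      ∀ (a₁ : dualLattice B V₁ (Λ ⊓ V₁.toAddSubgroup))
        (a₂ : dualLattice B V₂ (Λ ⊓ V₂.toAddSubgroup)),
        ((a₁ : V) + (a₂ : V) ∈ Λ) ↔
          φ (QuotientAddGroup.mk a₁) = QuotientAddGroup.mk a₂ :=
  selfdual_lattice_decomposition_discriminant_iso_general B hsymm hnondeg Λ hselfdual V₁ V₂ hcompl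
    horth hspan1 hspan2
end

section
/- Let G be a finite abelian group and let B : G × G → ℚ/ℤ be a biadditive pairing that is alternating (B(g,g) = 0 for all g ∈ G) and nondegenerate (if B(g,h) = 0 for all h ∈ G then g = 0). Then the order of G is a perfect square: there exists a natural number n with |G| = n². -/
/-!
Let `x` have maximal order `e`, the exponent of `G`. The exponent of the subgroup `B x G` of
`ℚ/ℤ` kills `x` by nondegeneracy, so some `B x y` has order `e`; as `ℚ/ℤ` has only `e` elements
killed by `e`, its multiples are all values of `B`. Hence `g ↦ (B x g, B y g)` maps `G` onto a
group of order `e²`, and `B` stays nondegenerate on the kernel `K`, because `G` is `K` plus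
integer combinations of `x` and `y`, both orthogonal to `K`. Induction on `|G|` concludes.
-/

open AddSubgroup

def HasSmallTorsion (A : Type*) [AddCommGroup A] : Prop :=
  ∀ n : ℕ, n ≠ 0 → {a : A | n • a = 0}.encard ≤ n

theorem HasSmallTorsion.mem_zmultiples {A : Type*} [AddCommGroup A] (hA : HasSmallTorsion A)
    {c a : A} (hc : 0 < addOrderOf c) (ha : addOrderOf c • a = 0) : a ∈ zmultiples c := by
  have : Finite (zmultiples c) := Nat.finite_of_card_ne_zero (Nat.card_zmultiples c ▸ hc.ne')
  have hsub : (zmultiples c : Set A) ⊆ {b | addOrderOf c • b = 0} := by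
    rintro _ ⟨k, rfl⟩
    simp [smul_comm (addOrderOf c) k c]
  have hcard : (zmultiples c : Set A).encard = addOrderOf c := by
    rw [Set.encard, ENat.card_eq_coe_natCard, ← Nat.card_zmultiples]
    rfl
  have heq := (Set.finite_of_encard_le_coe (hA _ hc.ne')).eq_of_subset_of_encard_le' hsub
    (hcard ▸ hA _ hc.ne')
  exact SetLike.mem_coe.mp (heq ▸ ha)

theorem AddCircle.hasSmallTorsion : HasSmallTorsion (AddCircle (1 : ℚ)) := fun n hn =>
  AddCircle.card_torsion_le_of_isSMulRegular 1 n hn (.of_ne_zero (Nat.cast_ne_zero.mpr hn))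

namespace AddMonoidHom

variable {G A : Type*} [AddCommGroup G] [AddCommGroup A]

def IsAlternating (B : G →+ G →+ A) : Prop := ∀ g, B g g = 0

def IsNondegenerate (B : G →+ G →+ A) : Prop := ∀ g, (∀ h, B g h = 0) → g = 0

def domRestrict₁₂ (B : G →+ G →+ A) (K : AddSubgroup G) : K →+ K →+ A :=
  (B.comp K.subtype).compl₂ K.subtype

variable {B : G →+ G →+ A}

theorem IsAlternating.apply_swap (hB : B.IsAlternating) (g h : G) : B h g = -B g h := by
  have := hB (g + h)
  simp only [map_add, add_apply, hB g, hB h, zero_add, add_zero] at this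
  exact eq_neg_of_add_eq_zero_left this

theorem IsAlternating.domRestrict₁₂ (hB : B.IsAlternating) (K : AddSubgroup G) :
    (B.domRestrict₁₂ K).IsAlternating :=
  fun k => hB k

theorem IsNondegenerate.exists_addOrderOf_apply_eq_exponent [Finite G]
    (hB : B.IsNondegenerate) : ∃ x y, addOrderOf (B x y) = AddMonoid.exponent G := by
  obtain ⟨x, hx⟩ := AddMonoid.exists_addOrderOf_eq_exponent (.of_finite (G := G))
  have : Finite (B x).range := Finite.of_surjective _ (B x).rangeRestrict_surjective
  obtain ⟨⟨_, y, rfl⟩, hy⟩ :=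
    AddMonoid.exists_addOrderOf_eq_exponent (.of_finite (G := (B x).range))
  refine ⟨x, y, Nat.dvd_antisymm ?_ ?_⟩
  · exact addOrderOf_dvd_of_nsmul_eq_zero <| by
      rw [← map_nsmul, AddMonoid.exponent_nsmul_eq_zero, map_zero]
  · rw [← hx, show addOrderOf (B x y) = _ from (AddSubgroup.addOrderOf_coe _).trans hy]
    refine addOrderOf_dvd_of_nsmul_eq_zero (hB _ fun h => ?_)
    rw [map_nsmul, nsmul_apply]
    exact congrArg Subtype.val
      (AddMonoid.exponent_nsmul_eq_zero (⟨B x h, h, rfl⟩ : (B x).range))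

theorem IsAlternating.prod_apply_zsmul_add_zsmul (hB : B.IsAlternating) (x y : G) (a b : ℤ) :
    (B x).prod (B y) (a • x + b • y) = (b • B x y, -(a • B x y)) := by
  ext <;> simp [hB x, hB y, hB.apply_swap x y]

section HyperbolicPair

variable [Finite G] (hA : HasSmallTorsion A) {x y : G}
  (hxy : addOrderOf (B x y) = AddMonoid.exponent G)
include hA hxy

theorem apply_mem_zmultiples_of_addOrderOf_eq_exponent (z g : G) :
    B z g ∈ zmultiples (B x y) :=
  hA.mem_zmultiples (hxy ▸ Nat.pos_of_ne_zero AddMonoid.exponent_ne_zero_of_finite) <| by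
    rw [hxy, ← map_nsmul, AddMonoid.exponent_nsmul_eq_zero, map_zero]

variable (hB : B.IsAlternating)
include hB

theorem IsAlternating.range_prod_eq :
    ((B x).prod (B y)).range = (zmultiples (B x y)).prod (zmultiples (B x y)) := by
  ext p
  constructor
  · rintro ⟨g, rfl⟩
    exact ⟨apply_mem_zmultiples_of_addOrderOf_eq_exponent hA hxy x g,
      apply_mem_zmultiples_of_addOrderOf_eq_exponent hA hxy y g⟩
  · rintro ⟨⟨m, hm⟩, ⟨n, hn⟩⟩
    refine ⟨-n • x + m • y, ?_⟩
    rw [hB.prod_apply_zsmul_add_zsmul, neg_smul, neg_neg]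
    exact Prod.ext hm hn

theorem IsAlternating.card_eq_exponent_sq_mul_card_ker :
    Nat.card G = AddMonoid.exponent G ^ 2 * Nat.card ((B x).prod (B y)).ker := by
  rw [← ((B x).prod (B y)).ker.card_mul_index, index_ker, hB.range_prod_eq hA hxy,
    Nat.card_congr (prodEquiv _ _).toEquiv, Nat.card_prod, Nat.card_zmultiples, hxy]
  ring

theorem IsAlternating.exists_sub_mem_ker_prod (g : G) :
    ∃ a b : ℤ, g - (a • x + b • y) ∈ ((B x).prod (B y)).ker := by
  obtain ⟨m, hm⟩ := apply_mem_zmultiples_of_addOrderOf_eq_exponent hA hxy x g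
  obtain ⟨n, hn⟩ := apply_mem_zmultiples_of_addOrderOf_eq_exponent hA hxy y g
  refine ⟨-n, m, ?_⟩
  rw [mem_ker, map_sub, hB.prod_apply_zsmul_add_zsmul, neg_smul, neg_neg, sub_eq_zero]
  exact Prod.ext hm.symm hn.symm

theorem IsNondegenerate.domRestrict₁₂_ker_prod (hnd : B.IsNondegenerate) :
    (B.domRestrict₁₂ ((B x).prod (B y)).ker).IsNondegenerate := by
  rintro ⟨k, hk⟩ hk0
  obtain ⟨hxk, hyk⟩ : B x k = 0 ∧ B y k = 0 := Prod.mk_eq_zero.mp hk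
  refine Subtype.ext (hnd k fun g => ?_)
  obtain ⟨a, b, hab⟩ := hB.exists_sub_mem_ker_prod hA hxy g
  calc B k g = B k (g - (a • x + b • y)) + (a • B k x + b • B k y) := by
        rw [← map_zsmul, ← map_zsmul, ← map_add, ← map_add, sub_add_cancel]
    _ = 0 := by
        rw [hB.apply_swap x, hB.apply_swap y, hxk, hyk, neg_zero, smul_zero, smul_zero, add_zero,
          add_zero]
        exact hk0 ⟨_, hab⟩

end HyperbolicPair

theorem IsNondegenerate.exists_card_eq_sq_mul_card [Finite G] [Nontrivial G]
    (hA : HasSmallTorsion A) (halt : B.IsAlternating) (hnd : B.IsNondegenerate) :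
    ∃ (e : ℕ) (K : AddSubgroup G), 1 < e ∧ Nat.card G = e ^ 2 * Nat.card K ∧
      (B.domRestrict₁₂ K).IsNondegenerate := by
  obtain ⟨x, y, hxy⟩ := hnd.exists_addOrderOf_apply_eq_exponent
  exact ⟨_, _, AddMonoid.one_lt_exponent, halt.card_eq_exponent_sq_mul_card_ker hA hxy,
    hnd.domRestrict₁₂_ker_prod hA hxy halt⟩

theorem IsNondegenerate.exists_card_eq_sq [Finite G] (hA : HasSmallTorsion A)
    (halt : B.IsAlternating) (hnd : B.IsNondegenerate) : ∃ n, Nat.card G = n ^ 2 := by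
  induction hN : Nat.card G using Nat.strong_induction_on generalizing G with
  | _ N ih =>
  rcases subsingleton_or_nontrivial G with hG | hG
  · exact ⟨1, by rw [← hN, Nat.card_unique, one_pow]⟩
  obtain ⟨e, K, he, hcard, hK⟩ := hnd.exists_card_eq_sq_mul_card hA halt
  have hKlt : Nat.card K < N := by
    rw [← hN, hcard]
    exact lt_mul_left Nat.card_pos (Nat.one_lt_pow two_ne_zero he)
  obtain ⟨n, hn⟩ := ih _ hKlt (halt.domRestrict₁₂ K) hK rfl
  exact ⟨e * n, by rw [← hN, hcard, hn, mul_pow]⟩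

end AddMonoidHom

/-- A finite abelian group carrying a biadditive, alternating, nondegenerate
pairing valued in `ℚ/ℤ` has order a perfect square. -/
theorem order_square_of_nondeg_alternating_pairing
    {G : Type*} [AddCommGroup G] [Finite G]
    (B : G → G → ℚ ⧸ AddSubgroup.zmultiples (1 : ℚ))
    (haddL : ∀ g₁ g₂ h, B (g₁ + g₂) h = B g₁ h + B g₂ h)
    (haddR : ∀ g h₁ h₂, B g (h₁ + h₂) = B g h₁ + B g h₂)
    (halt : ∀ g, B g g = 0)
    (hnondeg : ∀ g, (∀ h, B g h = 0) → g = 0) :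
    ∃ n : ℕ, Nat.card G = n ^ 2 := by
  let B' : G →+ G →+ AddCircle (1 : ℚ) :=
    .mk' (fun g => .mk' (B g) (haddR g)) fun g₁ g₂ => AddMonoidHom.ext (haddL g₁ g₂)
  exact AddMonoidHom.IsNondegenerate.exists_card_eq_sq (B := B') AddCircle.hasSmallTorsion halt
    hnondeg
end

section
/- Let H be a finite abelian group and let B : H × H → ℚ/ℤ be a biadditive pairing that is alternating (B(h,h) = 0 for all h) and nondegenerate (B(g,h) = 0 for all h implies g = 0). Let C ≤ H be a subgroup whose annihilator C^⊥ = {h ∈ H : B(h,c) = 0 for all c ∈ C} satisfies C^⊥ ⊆ C. Then the index of C^⊥ in C is a perfect square: there exists a natural number m with |C| = m² · |C^⊥|. (The pairing B descends to a nondegenerate alternating pairing on C/C^⊥.) -/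
/-!
An alternating pairing on `C` descends to a nondegenerate one on `C ⧸ (C ∩ C^⊥)`, and here
`C ∩ C^⊥ = C^⊥`; so it suffices to show that a finite abelian group `G` with a nondegenerate
alternating `ℚ/ℤ`-valued pairing `B` has square order. Take `x` of order `n = exp G` and `y` with `B x y` of
order `n`. As the `n`-torsion of `ℚ/ℤ` is cyclic of order `n`, all values of `B` lie in
`⟨B x y⟩`, so `z ↦ (B z x, B z y)` maps `G` onto `⟨B x y⟩²`. Its kernel `W` satisfies
`|G| = n² |W|`, and `B` stays nondegenerate on `W` because `G = ⟨x, y⟩ + W`; induct on `|G|`.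
-/

open AddSubgroup

local notation "ℚ⧸ℤ" => ℚ ⧸ zmultiples (1 : ℚ)

theorem ratModInt_mem_zmultiples_inv_of_nsmul_eq_zero {n : ℕ} (hn : n ≠ 0) {ξ : ℚ⧸ℤ}
    (hξ : n • ξ = 0) : ξ ∈ zmultiples (((n : ℚ)⁻¹ : ℚ) : ℚ⧸ℤ) := by
  induction ξ using QuotientAddGroup.induction_on with | H q => ?_
  rw [← QuotientAddGroup.mk_nsmul, QuotientAddGroup.eq_zero_iff, mem_zmultiples_iff] at hξ
  obtain ⟨k, hk⟩ := hξ
  refine ⟨k, ?_⟩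
  show k • (((n : ℚ)⁻¹ : ℚ) : ℚ⧸ℤ) = q
  rw [← QuotientAddGroup.mk_zsmul]
  congr 1
  simp only [zsmul_eq_mul, mul_one, nsmul_eq_mul] at hk ⊢
  field_simp
  linarith

theorem ratModInt_mem_zmultiples_of_nsmul_eq_zero {n : ℕ} (hn : n ≠ 0) {g ξ : ℚ⧸ℤ}
    (hg : addOrderOf g = n) (hξ : n • ξ = 0) : ξ ∈ zmultiples g := by
  set t : ℚ⧸ℤ := ↑((n : ℚ)⁻¹)
  have ht : n • t = 0 := by
    rw [← QuotientAddGroup.mk_nsmul, nsmul_eq_mul, mul_inv_cancel₀ (by exact_mod_cast hn)]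
    exact (QuotientAddGroup.eq_zero_iff _).2 (mem_zmultiples 1)
  have : Finite (zmultiples t) := Nat.finite_of_card_ne_zero <| by
    rw [Nat.card_zmultiples]
    exact (addOrderOf_pos_iff.2 <|
      isOfFinAddOrder_iff_nsmul_eq_zero.2 ⟨n, Nat.pos_of_ne_zero hn, ht⟩).ne'
  have hgt : zmultiples g = zmultiples t := by
    refine eq_of_le_of_card_ge (zmultiples_le_of_mem
      (ratModInt_mem_zmultiples_inv_of_nsmul_eq_zero hn (hg ▸ addOrderOf_nsmul_eq_zero g))) ?_
    rw [Nat.card_zmultiples, Nat.card_zmultiples, hg]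
    exact addOrderOf_le_of_nsmul_eq_zero (Nat.pos_of_ne_zero hn) ht
  exact hgt ▸ ratModInt_mem_zmultiples_inv_of_nsmul_eq_zero hn hξ

namespace AddMonoidHom

variable {G M : Type*} [AddCommGroup G] [AddCommGroup M] (B : G →+ G →+ M)

theorem apply_swap_eq_neg (halt : ∀ x, B x x = 0) (x y : G) : B y x = -B x y := by
  have h := halt (x + y)
  simp only [map_add, add_apply, halt, zero_add, add_zero] at h
  exact eq_neg_of_add_eq_zero_left h

theorem exists_addOrderOf_apply_eq [Finite G] (hnd : ∀ x, (∀ y, B x y = 0) → x = 0) (x : G) :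
    ∃ y, addOrderOf (B x y) = addOrderOf x := by
  have : Finite (B x).range := Finite.of_surjective _ (B x).rangeRestrict_surjective
  obtain ⟨⟨_, y, rfl⟩, hy⟩ := AddMonoid.exists_addOrderOf_eq_exponent
    (AddMonoid.ExponentExists.of_finite (G := (B x).range))
  refine ⟨y, (AddSubgroup.addOrderOf_coe _).trans (hy.trans ?_)⟩
  refine Nat.dvd_antisymm (AddMonoid.exponent_dvd_of_forall_nsmul_eq_zero ?_) ?_
  · rintro ⟨_, z, rfl⟩
    ext
    rw [coe_nsmul, ← nsmul_apply, ← map_nsmul, addOrderOf_nsmul_eq_zero, map_zero, zero_apply]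
    rfl
  · refine addOrderOf_dvd_of_nsmul_eq_zero (hnd _ fun z => ?_)
    rw [map_nsmul, nsmul_apply]
    exact congrArg Subtype.val (AddMonoid.exponent_nsmul_eq_zero (⟨B x z, z, rfl⟩ : (B x).range))

def restrict₂ (K : AddSubgroup G) : K →+ K →+ M := (B.comp K.subtype).compl₂ K.subtype

@[simp]
theorem restrict₂_apply (K : AddSubgroup G) (x y : K) : B.restrict₂ K x y = B x y := rfl

def pairWith (x y : G) : G →+ M × M := (B.flip x).prod (B.flip y)

@[simp]
theorem pairWith_apply (x y z : G) : B.pairWith x y z = (B z x, B z y) := rfl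

section HyperbolicPair

variable {B} (halt : ∀ x, B x x = 0) {x y : G}
include halt

theorem pairWith_zsmul_sub_zsmul (a b : ℤ) :
    B.pairWith x y (b • x - a • y) = (a • B x y, b • B x y) := by
  simp [halt, B.apply_swap_eq_neg halt y x]

variable (hB : ∀ z w, B z w ∈ zmultiples (B x y))
include hB

theorem range_pairWith :
    (B.pairWith x y).range = (zmultiples (B x y)).prod (zmultiples (B x y)) := by
  ext ⟨ξ, η⟩
  constructor
  · rintro ⟨z, hz⟩
    rw [← hz]
    exact ⟨hB z x, hB z y⟩
  · rintro ⟨⟨a, rfl⟩, ⟨b, rfl⟩⟩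
    exact ⟨b • x - a • y, pairWith_zsmul_sub_zsmul halt a b⟩

theorem exists_sub_mem_ker_pairWith (z : G) :
    ∃ a b : ℤ, z - (b • x - a • y) ∈ (B.pairWith x y).ker := by
  obtain ⟨⟨a, ha : a • B x y = B z x⟩, ⟨b, hb : b • B x y = B z y⟩⟩ :
      B.pairWith x y z ∈ (zmultiples (B x y)).prod (zmultiples (B x y)) :=
    range_pairWith halt hB ▸ ⟨z, rfl⟩
  refine ⟨a, b, ?_⟩
  rw [mem_ker, map_sub, pairWith_zsmul_sub_zsmul halt, pairWith_apply, ha, hb, sub_self]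

theorem card_eq_sq_mul_card_ker_pairWith [Finite G] :
    Nat.card G = addOrderOf (B x y) ^ 2 * Nat.card (B.pairWith x y).ker := by
  rw [card_eq_card_quotient_mul_card_addSubgroup (B.pairWith x y).ker,
    Nat.card_congr (QuotientAddGroup.quotientKerEquivRange _).toEquiv, range_pairWith halt hB,
    Nat.card_congr (prodEquiv _ _).toEquiv, Nat.card_prod, Nat.card_zmultiples, sq]

theorem eq_zero_of_forall_restrict₂_ker_pairWith (hnd : ∀ x, (∀ y, B x y = 0) → x = 0)
    (w : (B.pairWith x y).ker) (hw : ∀ w', B.restrict₂ _ w w' = 0) : w = 0 := by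
  obtain ⟨hwx, hwy⟩ : B w x = 0 ∧ B w y = 0 := by simpa [Prod.ext_iff] using mem_ker.1 w.2
  refine Subtype.ext (hnd w fun z => ?_)
  obtain ⟨a, b, hz⟩ := exists_sub_mem_ker_pairWith halt hB z
  simpa [map_zsmul, hwx, hwy] using hw ⟨_, hz⟩

end HyperbolicPair

theorem exists_addSubgroup_card_eq_sq_mul [Finite G] [Nontrivial G] (B : G →+ G →+ ℚ⧸ℤ)
    (halt : ∀ x, B x x = 0) (hnd : ∀ x, (∀ y, B x y = 0) → x = 0) :
    ∃ (W : AddSubgroup G) (n : ℕ), 1 < n ∧ Nat.card G = n ^ 2 * Nat.card W ∧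
      ∀ w : W, (∀ w', B.restrict₂ W w w' = 0) → w = 0 := by
  obtain ⟨x, hx⟩ :=
    AddMonoid.exists_addOrderOf_eq_exponent (AddMonoid.ExponentExists.of_finite (G := G))
  obtain ⟨y, hy⟩ := B.exists_addOrderOf_apply_eq hnd x
  have hB : ∀ z w, B z w ∈ zmultiples (B x y) := fun z w =>
    ratModInt_mem_zmultiples_of_nsmul_eq_zero AddMonoid.exponent_ne_zero_of_finite (hy.trans hx)
      (by rw [← nsmul_apply, ← map_nsmul, AddMonoid.exponent_nsmul_eq_zero, map_zero, zero_apply])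
  exact ⟨_, _, hy.trans hx ▸ AddMonoid.one_lt_exponent, card_eq_sq_mul_card_ker_pairWith halt hB,
    eq_zero_of_forall_restrict₂_ker_pairWith halt hB hnd⟩

theorem exists_card_eq_sq_of_nondegenerate [Finite G] (B : G →+ G →+ ℚ⧸ℤ)
    (halt : ∀ x, B x x = 0) (hnd : ∀ x, (∀ y, B x y = 0) → x = 0) :
    ∃ m : ℕ, Nat.card G = m ^ 2 := by
  induction hG : Nat.card G using Nat.strong_induction_on generalizing G with
  | _ N ih =>
  cases subsingleton_or_nontrivial G with
  | inl _ => exact ⟨1, by rw [← hG, Nat.card_unique, one_pow]⟩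
  | inr _ =>
    obtain ⟨W, n, hn, hcard, hndW⟩ := exists_addSubgroup_card_eq_sq_mul B halt hnd
    have hlt : Nat.card W < N := by
      rw [← hG, hcard]
      exact lt_mul_left Nat.card_pos (Nat.one_lt_pow two_ne_zero hn)
    obtain ⟨m, hm⟩ := ih _ hlt (B.restrict₂ W) (fun w => halt w) hndW rfl
    exact ⟨n * m, by rw [← hG, hcard, hm, mul_pow]⟩

theorem mem_ker_restrict₂ {K : AddSubgroup G} {x : K} :
    x ∈ (B.restrict₂ K).ker ↔ ∀ y ∈ K, B x y = 0 := by
  simp [AddMonoidHom.ext_iff]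

theorem card_ker_restrict₂ (K : AddSubgroup G) :
    Nat.card (B.restrict₂ K).ker = Nat.card {x : G // x ∈ K ∧ ∀ y ∈ K, B x y = 0} :=
  Nat.card_congr <| (Equiv.subtypeEquivRight fun _ => B.mem_ker_restrict₂).trans
    (Equiv.subtypeSubtypeEquivSubtypeInter (· ∈ K) fun x => ∀ y ∈ K, B x y = 0)

def pairingQuotientKer (halt : ∀ x, B x x = 0) : G ⧸ B.ker →+ G ⧸ B.ker →+ M :=
  (QuotientAddGroup.lift B.ker (QuotientAddGroup.lift B.ker B le_rfl).flip fun k hk => by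
    ext x
    simp [B.apply_swap_eq_neg halt k x, mem_ker.1 hk]).flip

@[simp]
theorem pairingQuotientKer_mk (halt : ∀ x, B x x = 0) (x y : G) :
    B.pairingQuotientKer halt x y = B x y := rfl

theorem exists_card_quotient_ker_eq_sq [Finite G] (B : G →+ G →+ ℚ⧸ℤ)
    (halt : ∀ x, B x x = 0) : ∃ m : ℕ, Nat.card (G ⧸ B.ker) = m ^ 2 := by
  refine exists_card_eq_sq_of_nondegenerate (B.pairingQuotientKer halt) (fun x => ?_)
    fun x hx => ?_
  · induction x using QuotientAddGroup.induction_on with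
    | H x => exact halt x
  · induction x using QuotientAddGroup.induction_on with
    | H x =>
      refine (QuotientAddGroup.eq_zero_iff x).2 (ext fun y => ?_)
      simpa using hx y

end AddMonoidHom

theorem index_annihilator_square_general
    {H : Type*} [AddCommGroup H] [Finite H]
    (B : H → H → ℚ ⧸ AddSubgroup.zmultiples (1 : ℚ))
    (haddL : ∀ g₁ g₂ h, B (g₁ + g₂) h = B g₁ h + B g₂ h)
    (haddR : ∀ g h₁ h₂, B g (h₁ + h₂) = B g h₁ + B g h₂)
    (halt : ∀ h, B h h = 0)
    (C : AddSubgroup H)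
    (hperp_sub : ∀ h : H, (∀ c ∈ C, B h c = 0) → h ∈ C) :
    ∃ m : ℕ, Nat.card C = m ^ 2 * Nat.card {h : H // ∀ c ∈ C, B h c = 0} := by
  let B' : H →+ H →+ ℚ⧸ℤ :=
    AddMonoidHom.mk' (fun g => AddMonoidHom.mk' (B g) (haddR g)) fun g₁ g₂ =>
      AddMonoidHom.ext (haddL g₁ g₂)
  obtain ⟨m, hm⟩ := (B'.restrict₂ C).exists_card_quotient_ker_eq_sq fun c => halt c
  refine ⟨m, ?_⟩
  rw [card_eq_card_quotient_mul_card_addSubgroup (B'.restrict₂ C).ker, hm, B'.card_ker_restrict₂]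
  exact congrArg _ <| Nat.card_congr <|
    Equiv.subtypeEquivRight fun h => ⟨And.right, fun hh => ⟨hperp_sub h hh, hh⟩⟩

/-- If `H` is a finite abelian group with a biadditive, alternating,
nondegenerate pairing valued in `ℚ/ℤ`, and `C ≤ H` is a subgroup whose annihilator `C^⊥`
satisfies `C^⊥ ⊆ C`, then the index of `C^⊥` in `C` is a perfect square:
`|C| = m² · |C^⊥|` for some natural number `m`. -/
theorem index_annihilator_square
    {H : Type*} [AddCommGroup H] [Finite H]
    (B : H → H → ℚ ⧸ AddSubgroup.zmultiples (1 : ℚ))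
    (haddL : ∀ g₁ g₂ h, B (g₁ + g₂) h = B g₁ h + B g₂ h)
    (haddR : ∀ g h₁ h₂, B g (h₁ + h₂) = B g h₁ + B g h₂)
    (halt : ∀ h, B h h = 0)
    (hnondeg : ∀ g, (∀ h, B g h = 0) → g = 0)
    (C : AddSubgroup H)
    (hperp_sub : ∀ h : H, (∀ c ∈ C, B h c = 0) → h ∈ C) :
    ∃ m : ℕ, Nat.card C = m ^ 2 * Nat.card {h : H // ∀ c ∈ C, B h c = 0} :=
  index_annihilator_square_general B haddL haddR halt C hperp_sub
end
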